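/- Let K ≥ 2, λ ∈ (0,1), and for each k ∈ {1, …, K} define the smoothed one-hot vector μ^(k) := λ e_k + ((1−λ)/K) 𝟙 ∈ ℝ^K, where e_k is the k-th standard basis vector and 𝟙 the all-ones vector. Set L := log(1 + Kλ/(1−λ)). Then for all k ≠ ℓ, the Aitchison inner product satisfies ⟨μ^(k), μ^(ℓ)⟩_A = −L²/K. -/

import Mathlib

/-- The Aitchison inner product on the open probability simplex in `ℝ^K`:
`⟨x, y⟩_A := (1/(2K)) Σ_{i,j} log(x_i/x_j) · log(y_i/y_j)`. -/
noncomputable def aitchisonInner (K : ℕ) (x y : Fin K → ℝ) : ℝ :=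
  (1 / (2 * (K : ℝ))) * ∑ i, ∑ j, Real.log (x i / x j) * Real.log (y i / y j)

/-- The smoothed one-hot vector `μ^(k) := λ e_k + ((1−λ)/K) 𝟙 ∈ ℝ^K`. -/
noncomputable def smoothOneHot (K : ℕ) (lam : ℝ) (k : Fin K) : Fin K → ℝ :=
  fun i => lam * (if i = k then 1 else 0) + (1 - lam) / (K : ℝ)

/-! Since `μ^(k)_k / μ^(k)_i = 1 + Kλ/(1-λ)` for `i ≠ k`, the log-ratios of `μ^(k)` are
`log (μ^(k)_i / μ^(k)_j) = u_i - u_j` with `u = L e_k`. Whenever log-ratios have this form the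
Aitchison inner product is the centred Euclidean one, `Σ u_i v_i - (Σ u_i)(Σ v_i)/K`; for
`u = L e_k`, `v = L e_ℓ` with `k ≠ ℓ` this is `0 - L·L/K`. -/

open Real Finset

theorem Finset.sum_sum_sub_mul_sub {ι : Type*} [Fintype ι] (u v : ι → ℝ) :
    ∑ i, ∑ j, (u i - u j) * (v i - v j)
      = 2 * (Fintype.card ι * ∑ i, u i * v i - (∑ i, u i) * ∑ i, v i) := by
  have hexpand : ∀ i j,
      (u i - u j) * (v i - v j) = u i * v i + u j * v j - u i * v j - u j * v i :=
    fun _ _ => by ring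
  simp only [hexpand, sum_add_distrib, sum_sub_distrib, sum_const, card_univ, nsmul_eq_mul,
    ← mul_sum, ← sum_mul]
  ring

theorem aitchisonInner_eq_of_log_div {K : ℕ} (hK : K ≠ 0) {x y u v : Fin K → ℝ}
    (hx : ∀ i j, log (x i / x j) = u i - u j) (hy : ∀ i j, log (y i / y j) = v i - v j) :
    aitchisonInner K x y = ∑ i, u i * v i - (∑ i, u i) * (∑ i, v i) / K := by
  simp only [aitchisonInner, hx, hy, sum_sum_sub_mul_sub, Fintype.card_fin]
  field_simp

theorem smoothOneHot_pos {K : ℕ} {lam : ℝ} (hlam : lam ∈ Set.Ioo (0 : ℝ) 1) (k i : Fin K) :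
    0 < smoothOneHot K lam k i := by
  have hK : (0 : ℝ) < K := by exact_mod_cast k.pos
  have hb : 0 < (1 - lam) / K := div_pos (by linarith [hlam.2]) hK
  have := hlam.1
  simp only [smoothOneHot]
  split_ifs <;> positivity

theorem log_smoothOneHot {K : ℕ} {lam : ℝ} (hlam : lam ∈ Set.Ioo (0 : ℝ) 1) (k i : Fin K) :
    log (smoothOneHot K lam k i)
      = log ((1 - lam) / K) + (Pi.single k (log (1 + K * lam / (1 - lam))) : Fin K → ℝ) i := by
  have hK : (0 : ℝ) < K := by exact_mod_cast k.pos
  have hb : 0 < (1 - lam) / K := div_pos (by linarith [hlam.2]) hK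
  rcases eq_or_ne i k with rfl | hik
  · have hL : 0 < 1 + K * lam / (1 - lam) := by
      have := div_pos (mul_pos hK hlam.1) (by linarith [hlam.2] : 0 < 1 - lam)
      linarith
    have hsplit : smoothOneHot K lam i i = (1 - lam) / K * (1 + K * lam / (1 - lam)) := by
      simp only [smoothOneHot, if_true]
      field_simp [(by linarith [hlam.2] : 1 - lam ≠ 0)]
      ring
    rw [hsplit, log_mul hb.ne' hL.ne', Pi.single_eq_same]
  · simp [smoothOneHot, hik]

theorem log_smoothOneHot_div {K : ℕ} {lam : ℝ} (hlam : lam ∈ Set.Ioo (0 : ℝ) 1)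
    (k i j : Fin K) :
    log (smoothOneHot K lam k i / smoothOneHot K lam k j)
      = (Pi.single k (log (1 + K * lam / (1 - lam))) : Fin K → ℝ) i
        - (Pi.single k (log (1 + K * lam / (1 - lam))) : Fin K → ℝ) j := by
  rw [log_div (smoothOneHot_pos hlam k i).ne' (smoothOneHot_pos hlam k j).ne',
    log_smoothOneHot hlam, log_smoothOneHot hlam]
  ring

theorem aitchisonInner_smoothOneHot_ne_general
    (K : ℕ) (lam : ℝ) (hlam : lam ∈ Set.Ioo (0 : ℝ) 1)
    (k l : Fin K) (hkl : k ≠ l) :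
    aitchisonInner K (smoothOneHot K lam k) (smoothOneHot K lam l)
      = -(Real.log (1 + (K : ℝ) * lam / (1 - lam))) ^ 2 / (K : ℝ) := by
  rw [aitchisonInner_eq_of_log_div k.pos.ne' (log_smoothOneHot_div hlam k)
    (log_smoothOneHot_div hlam l)]
  simp [Pi.single_apply, hkl.symm]
  ring

/-- For `k ≠ ℓ`, the Aitchison inner product of the smoothed one-hot vectors is
`⟨μ^(k), μ^(ℓ)⟩_A = −L²/K` where `L := log(1 + Kλ/(1−λ))`. -/
theorem aitchisonInner_smoothOneHot_ne
    (K : ℕ) (hK : 2 ≤ K) (lam : ℝ) (hlam : lam ∈ Set.Ioo (0 : ℝ) 1)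
    (k l : Fin K) (hkl : k ≠ l) :
    aitchisonInner K (smoothOneHot K lam k) (smoothOneHot K lam l)
      = -(Real.log (1 + (K : ℝ) * lam / (1 - lam))) ^ 2 / (K : ℝ) :=
  aitchisonInner_smoothOneHot_ne_general K lam hlam k l hkl
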